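/- arXiv:2110.03652 — 3 statements merged into one kernel-verified Lean document; each statement's English description precedes it below -/
import Mathlib

section
/- For probability measures μ ≪ ν on a measurable space X, the squared Hellinger distance H²(μ,ν) := ∫ (√(dμ/dν) − 1)² dν satisfies: for every measurable f : X → ℝ with f(x) < 1 for all x and f, f/(1−f) integrable, H²(μ,ν) ≥ ∫ f dμ − ∫ f/(1−f) dν, with equality for f = 1 − (dμ/dν)^{−1/2} (assuming integrability). -/
/-! Write `r = dμ/dν`. Since `∫ f dμ = ∫ r f dν`, both claims compare integrands against `ν`:
for `f < 1` and `t = 1 - f > 0` one has `r f - f / (1 - f) = (√r - 1)² - (t √r - 1)² / t`,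
which gives the bound, with equality exactly when `t = 1 / √r`. -/

open MeasureTheory

lemma mul_sub_div_one_sub_le_sqrt_sub_one_sq {r f : ℝ} (hr : 0 ≤ r) (hf : f < 1) :
    r * f - f / (1 - f) ≤ (√r - 1) ^ 2 := by
  have ht : 0 < 1 - f := by linarith
  obtain ⟨s, hs, rfl⟩ : ∃ s, 0 ≤ s ∧ r = s ^ 2 :=
    ⟨√r, Real.sqrt_nonneg r, (Real.sq_sqrt hr).symm⟩
  rw [Real.sqrt_sq hs, sub_le_iff_le_add, ← sub_le_iff_le_add', le_div_iff₀ ht]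
  nlinarith [sq_nonneg ((1 - f) * s - 1)]

lemma mul_sub_div_one_sub_eq_sqrt_sub_one_sq {r : ℝ} (hr : 0 < r) :
    r * (1 - r ^ (-(1:ℝ)/2)) - (1 - r ^ (-(1:ℝ)/2)) / (1 - (1 - r ^ (-(1:ℝ)/2))) =
      (√r - 1) ^ 2 := by
  rw [neg_div, Real.rpow_neg hr.le, ← Real.sqrt_eq_rpow]
  field_simp
  linear_combination (1 - √r) * Real.sq_sqrt hr.le

namespace MeasureTheory.Measure

variable {X : Type*} [MeasurableSpace X] {μ ν : Measure X}

lemma integrable_sqrt_toReal_rnDeriv_sub_one_sq [IsFiniteMeasure μ] [IsFiniteMeasure ν] :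
    Integrable (fun x => (√(μ.rnDeriv ν x).toReal - 1) ^ 2) ν := by
  have hr : Measurable fun x => (μ.rnDeriv ν x).toReal :=
    (measurable_rnDeriv μ ν).ennreal_toReal
  refine ((integrable_toReal_rnDeriv (μ := μ)).add (integrable_const 1)).mono'
    ((hr.sqrt.sub measurable_const).pow_const 2).aestronglyMeasurable (ae_of_all _ fun x => ?_)
  have hr0 : 0 ≤ (μ.rnDeriv ν x).toReal := ENNReal.toReal_nonneg
  rw [Real.norm_of_nonneg (sq_nonneg _), Pi.add_apply]
  nlinarith [Real.sq_sqrt hr0, Real.sqrt_nonneg (μ.rnDeriv ν x).toReal]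

lemma integral_sub_integral_eq_integral_toReal_rnDeriv_mul_sub [SigmaFinite μ]
    [HaveLebesgueDecomposition μ ν] (hμν : μ ≪ ν) {g h : X → ℝ}
    (hg : Integrable g μ) (hh : Integrable h ν) :
    ∫ x, g x ∂μ - ∫ x, h x ∂ν = ∫ x, (μ.rnDeriv ν x).toReal * g x - h x ∂ν := by
  rw [← integral_toReal_rnDeriv_mul hμν,
    integral_sub ((integrable_toReal_rnDeriv_mul_iff hμν).mpr hg) hh]

end MeasureTheory.Measure

open Measure in
theorem hellinger_variational {X : Type*} [MeasurableSpace X]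
    (μ ν : Measure X) [IsProbabilityMeasure μ] [IsProbabilityMeasure ν]
    (hac : μ ≪ ν) :
    (∀ f : X → ℝ, Measurable f → (∀ x, f x < 1) → Integrable f μ →
      Integrable (fun x => f x / (1 - f x)) ν →
      ∫ x, f x ∂μ - ∫ x, f x / (1 - f x) ∂ν ≤
        ∫ x, (Real.sqrt ((μ.rnDeriv ν x).toReal) - 1) ^ 2 ∂ν) ∧
    ((∀ᵐ x ∂ν, 0 < μ.rnDeriv ν x) →
      Integrable (fun x => 1 - ((μ.rnDeriv ν x).toReal) ^ (-(1:ℝ)/2)) μ →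
      Integrable (fun x => (1 - ((μ.rnDeriv ν x).toReal) ^ (-(1:ℝ)/2)) /
        (1 - (1 - ((μ.rnDeriv ν x).toReal) ^ (-(1:ℝ)/2)))) ν →
      (∫ x, (1 - ((μ.rnDeriv ν x).toReal) ^ (-(1:ℝ)/2)) ∂μ) -
        ∫ x, (1 - ((μ.rnDeriv ν x).toReal) ^ (-(1:ℝ)/2)) /
          (1 - (1 - ((μ.rnDeriv ν x).toReal) ^ (-(1:ℝ)/2))) ∂ν =
        ∫ x, (Real.sqrt ((μ.rnDeriv ν x).toReal) - 1) ^ 2 ∂ν) := by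
  constructor
  · intro f _ hf hfμ hfν
    rw [integral_sub_integral_eq_integral_toReal_rnDeriv_mul_sub hac hfμ hfν]
    exact integral_mono (((integrable_toReal_rnDeriv_mul_iff hac).mpr hfμ).sub hfν)
      integrable_sqrt_toReal_rnDeriv_sub_one_sq
      fun x => mul_sub_div_one_sub_le_sqrt_sub_one_sq ENNReal.toReal_nonneg (hf x)
  · intro hpos hfμ hfν
    rw [integral_sub_integral_eq_integral_toReal_rnDeriv_mul_sub hac hfμ hfν]
    refine integral_congr_ae ?_
    filter_upwards [hpos, rnDeriv_lt_top μ ν] with x hx hx_top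
    exact mul_sub_div_one_sub_eq_sqrt_sub_one_sq (ENNReal.toReal_pos hx.ne' hx_top.ne)
end

section
/- Let f : ℝᵈ → ℝ be an L¹ ∩ L² function whose Fourier transform F̂ satisfies the Plancherel relations for all partial derivatives up to order s = ⌊d/2⌋ + 2, with ‖D^α f‖_{L²} ≤ b for all multi-indices α with |α| ∈ {1, s}. Then the spectral norm S₁(f) := ∫_{ℝᵈ} ‖ω‖₁ |F̂(ω)| dω is finite and satisfies S₁(f) ≤ b·√d·κ_d, where κ_d² := (d + d^s) ∫_{ℝᵈ} (1 + ‖ω‖^{2(s−1)})^{−1} dω < ∞. -/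
open MeasureTheory
open scoped RealInnerProductSpace

/-- The Fourier transform of an integrable complex-valued function on ℝᵈ,
under the convention `F̂(ω) = ∫ e^{-i ω·x} f(x) dx`. -/
noncomputable def fourierTr (d : ℕ) (f : EuclideanSpace ℝ (Fin d) → ℂ)
    (ω : EuclideanSpace ℝ (Fin d)) : ℂ :=
  ∫ x, Complex.exp (-Complex.I * (⟪ω, x⟫ : ℝ)) * f x

/-!
With the weight `w ω = 1 + ‖ω‖ ^ (2 (s - 1))`, Cauchy–Schwarz gives
`∫ ‖ω‖ |F̂| ≤ (∫ w⁻¹)^(1/2) (∫ (‖ω‖² + ‖ω‖^(2s)) |F̂|²)^(1/2)`. The first factor is finite since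
`2 (s - 1) > d`. The second is controlled coordinatewise by the hypotheses for `α = eᵢ` and
`α = s • eᵢ`, using `‖ω‖^(2k) ≤ d^(k-1) ∑ᵢ ωᵢ^(2k)` (power mean inequality). Finally
`‖ω‖₁ ≤ √d ‖ω‖`.
-/

open scoped ENNReal

theorem continuous_fourierTr {d : ℕ} {f : EuclideanSpace ℝ (Fin d) → ℂ} (hf : Integrable f) :
    Continuous (fourierTr d f) := by
  refine continuous_of_dominated (fun ω => ?_) (fun ω => .of_forall fun x => ?_) hf.norm
    (.of_forall fun x => by fun_prop)
  · exact (Continuous.aestronglyMeasurable (by fun_prop)).mul hf.1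
  · rw [norm_mul, Complex.norm_exp]
    simp

theorem EuclideanSpace.sum_abs_le_sqrt_card_mul_norm {ι : Type*} [Fintype ι]
    (x : EuclideanSpace ℝ ι) : ∑ i, |x i| ≤ √(Fintype.card ι) * ‖x‖ := by
  rw [← Real.sqrt_sq (norm_nonneg x), ← Real.sqrt_mul (Nat.cast_nonneg _),
    EuclideanSpace.real_norm_sq_eq]
  refine Real.le_sqrt_of_sq_le ?_
  simpa [sq_abs] using sq_sum_le_card_mul_sum_sq (s := Finset.univ) (f := fun i => |x i|)

theorem EuclideanSpace.norm_pow_le_card_pow_mul_sum_pow {ι : Type*} [Fintype ι]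
    (x : EuclideanSpace ℝ ι) (k : ℕ) :
    ‖x‖ ^ (2 * (k + 1)) ≤ (Fintype.card ι : ℝ) ^ k * ∑ i, x i ^ (2 * (k + 1)) := by
  simp_rw [pow_mul, EuclideanSpace.real_norm_sq_eq]
  simpa using pow_sum_le_card_mul_sum_pow (s := Finset.univ) (f := fun i => x i ^ 2)
    (fun i _ => sq_nonneg _) k

theorem integrable_inv_one_add_norm_pow {E : Type*} [NormedAddCommGroup E] [NormedSpace ℝ E]
    [FiniteDimensional ℝ E] [MeasurableSpace E] [BorelSpace E] {μ : Measure E}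
    [μ.IsAddHaarMeasure] {k : ℕ} (hk : Module.finrank ℝ E < k) :
    Integrable (fun x : E => (1 + ‖x‖ ^ k)⁻¹) μ := by
  refine ((integrable_one_add_norm (μ := μ) (r := k) (by exact_mod_cast hk)).const_mul
    (2 ^ (k - 1))).mono' (by fun_prop) (.of_forall fun x => ?_)
  rw [Real.norm_of_nonneg (by positivity), Real.rpow_neg (by positivity), Real.rpow_natCast,
    ← div_eq_mul_inv, inv_le_iff_one_le_mul₀' (by positivity), mul_div_assoc',
    le_div_iff₀ (by positivity), one_mul]
  simpa [mul_comm] using add_pow_le zero_le_one (norm_nonneg x) k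

theorem ENNReal.lintegral_le_lintegral_inv_mul_lintegral_mul_sq {α : Type*} [MeasurableSpace α]
    {μ : Measure α} {u w : α → ℝ≥0∞} (hu : AEMeasurable u μ) (hw : AEMeasurable w μ)
    (hw0 : ∀ x, w x ≠ 0) (hw_top : ∀ x, w x ≠ ∞) :
    ∫⁻ x, u x ∂μ ≤
      (∫⁻ x, (w x)⁻¹ ∂μ) ^ (1 / 2 : ℝ) * (∫⁻ x, w x * u x ^ 2 ∂μ) ^ (1 / 2 : ℝ) := by
  -- Hölder for `u = w ^ (-1/2) * (w ^ (1/2) * u)`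
  have h := ENNReal.lintegral_mul_le_Lp_mul_Lq μ Real.HolderConjugate.two_two
    (f := fun x => (w x)⁻¹ ^ (1 / 2 : ℝ)) (g := fun x => w x ^ (1 / 2 : ℝ) * u x)
    (by fun_prop) (by fun_prop)
  have hprod (x : α) : (w x)⁻¹ ^ (1 / 2 : ℝ) * (w x ^ (1 / 2 : ℝ) * u x) = u x := by
    rw [← mul_assoc, ← ENNReal.mul_rpow_of_nonneg _ _ (by norm_num),
      ENNReal.inv_mul_cancel (hw0 x) (hw_top x), ENNReal.one_rpow, one_mul]
  have hinv (x : α) : ((w x)⁻¹ ^ (1 / 2 : ℝ)) ^ (2 : ℝ) = (w x)⁻¹ := by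
    rw [← ENNReal.rpow_mul]; norm_num
  have hsq (x : α) : (w x ^ (1 / 2 : ℝ) * u x) ^ (2 : ℝ) = w x * u x ^ 2 := by
    rw [ENNReal.mul_rpow_of_nonneg _ _ zero_le_two, ← ENNReal.rpow_mul]; norm_num
  simpa only [Pi.mul_apply, hprod, hinv, hsq] using h

theorem lintegral_norm_pow_mul_le {ι : Type*} [Fintype ι] {g : EuclideanSpace ℝ ι → ℝ}
    (hg : Measurable g) (hg0 : 0 ≤ g) (k : ℕ) {B : ℝ≥0∞}
    (hB : ∀ i, ∫⁻ x, ENNReal.ofReal (x i ^ (2 * (k + 1)) * g x) ≤ B) :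
    ∫⁻ x, ENNReal.ofReal (‖x‖ ^ (2 * (k + 1)) * g x) ≤ (Fintype.card ι : ℝ≥0∞) ^ (k + 1) * B := by
  have hterm (x : EuclideanSpace ℝ ι) (i : ι) : 0 ≤ x i ^ (2 * (k + 1)) * g x :=
    mul_nonneg (by rw [pow_mul]; positivity) (hg0 x)
  calc ∫⁻ x, ENNReal.ofReal (‖x‖ ^ (2 * (k + 1)) * g x)
      ≤ ∫⁻ x, ENNReal.ofReal ((Fintype.card ι : ℝ) ^ k) *
          ∑ i, ENNReal.ofReal (x i ^ (2 * (k + 1)) * g x) := by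
        refine lintegral_mono fun x => ?_
        rw [← ENNReal.ofReal_sum_of_nonneg fun i _ => hterm x i,
          ← ENNReal.ofReal_mul (by positivity), ← Finset.sum_mul, ← mul_assoc]
        gcongr
        · exact hg0 x
        · exact EuclideanSpace.norm_pow_le_card_pow_mul_sum_pow x k
    _ = ENNReal.ofReal ((Fintype.card ι : ℝ) ^ k) *
          ∑ i, ∫⁻ x, ENNReal.ofReal (x i ^ (2 * (k + 1)) * g x) := by
        rw [lintegral_const_mul' _ _ ENNReal.ofReal_ne_top,
          lintegral_finsetSum _ fun i _ => by fun_prop]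
    _ ≤ ENNReal.ofReal ((Fintype.card ι : ℝ) ^ k) * ∑ _i : ι, B := by gcongr with i; exact hB i
    _ = (Fintype.card ι : ℝ≥0∞) ^ (k + 1) * B := by
        rw [Finset.sum_const, nsmul_eq_mul, Finset.card_univ, ← mul_assoc, pow_succ,
          ENNReal.ofReal_pow (Nat.cast_nonneg _), ENNReal.ofReal_natCast]

theorem lintegral_norm_sq_add_norm_pow_mul_le {ι : Type*} [Fintype ι]
    {g : EuclideanSpace ℝ ι → ℝ} (hg : Measurable g) (hg0 : 0 ≤ g) (m : ℕ) {B : ℝ≥0∞}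
    (h₁ : ∀ i, ∫⁻ x, ENNReal.ofReal (x i ^ 2 * g x) ≤ B)
    (hₘ : ∀ i, ∫⁻ x, ENNReal.ofReal (x i ^ (2 * (m + 1)) * g x) ≤ B) :
    ∫⁻ x, ENNReal.ofReal ((‖x‖ ^ 2 + ‖x‖ ^ (2 * (m + 1))) * g x) ≤
      ((Fintype.card ι : ℝ≥0∞) + (Fintype.card ι : ℝ≥0∞) ^ (m + 1)) * B := by
  have hsplit (x : EuclideanSpace ℝ ι) :
      ENNReal.ofReal ((‖x‖ ^ 2 + ‖x‖ ^ (2 * (m + 1))) * g x) =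
        ENNReal.ofReal (‖x‖ ^ (2 * (0 + 1)) * g x) +
          ENNReal.ofReal (‖x‖ ^ (2 * (m + 1)) * g x) := by
    rw [← ENNReal.ofReal_add (mul_nonneg (by positivity) (hg0 x))
      (mul_nonneg (by positivity) (hg0 x)), add_mul]
  rw [lintegral_congr hsplit, lintegral_add_left (by fun_prop), add_mul]
  gcongr
  · simpa using lintegral_norm_pow_mul_le hg hg0 0 (B := B) (by simpa using h₁)
  · exact lintegral_norm_pow_mul_le hg hg0 m hₘ

theorem lintegral_norm_mul_le_of_weight {E : Type*} [NormedAddCommGroup E] [MeasurableSpace E]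
    [OpensMeasurableSpace E] {μ : Measure E} {g : E → ℝ} (hg : Measurable g) (hg0 : 0 ≤ g)
    (m : ℕ) (hw : Integrable (fun x : E => (1 + ‖x‖ ^ (2 * m))⁻¹) μ) :
    ∫⁻ x, ENNReal.ofReal (‖x‖ * g x) ∂μ ≤
      ENNReal.ofReal (∫ x, (1 + ‖x‖ ^ (2 * m))⁻¹ ∂μ) ^ (1 / 2 : ℝ) *
        (∫⁻ x, ENNReal.ofReal ((‖x‖ ^ 2 + ‖x‖ ^ (2 * (m + 1))) * g x ^ 2) ∂μ) ^ (1 / 2 : ℝ) := by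
  have hinv (x : E) :
      (ENNReal.ofReal (1 + ‖x‖ ^ (2 * m)))⁻¹ = ENNReal.ofReal (1 + ‖x‖ ^ (2 * m))⁻¹ :=
    (ENNReal.ofReal_inv_of_pos (by positivity)).symm
  have hweight (x : E) :
      ENNReal.ofReal (1 + ‖x‖ ^ (2 * m)) * ENNReal.ofReal (‖x‖ * g x) ^ 2 =
        ENNReal.ofReal ((‖x‖ ^ 2 + ‖x‖ ^ (2 * (m + 1))) * g x ^ 2) := by
    rw [← ENNReal.ofReal_pow (mul_nonneg (norm_nonneg x) (hg0 x)),
      ← ENNReal.ofReal_mul (by positivity)]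
    congr 1
    ring
  have h := ENNReal.lintegral_le_lintegral_inv_mul_lintegral_mul_sq (μ := μ)
    (u := fun x => ENNReal.ofReal (‖x‖ * g x)) (w := fun x => ENNReal.ofReal (1 + ‖x‖ ^ (2 * m)))
    (by fun_prop) (by fun_prop) (fun x => by positivity) (fun _ => ENNReal.ofReal_ne_top)
  simpa only [hinv, hweight, ← ofReal_integral_eq_lintegral_ofReal hw
    (.of_forall fun x => by positivity)] using h

theorem lintegral_sum_abs_mul_le {ι : Type*} [Fintype ι] {g : EuclideanSpace ℝ ι → ℝ}
    (hg : Measurable g) (hg0 : 0 ≤ g) :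
    ∫⁻ x, ENNReal.ofReal ((∑ i, |x i|) * g x) ≤
      ENNReal.ofReal √(Fintype.card ι) * ∫⁻ x, ENNReal.ofReal (‖x‖ * g x) := by
  rw [← lintegral_const_mul _ (by fun_prop)]
  refine lintegral_mono fun x => ?_
  rw [← ENNReal.ofReal_mul (by positivity), ← mul_assoc]
  gcongr
  · exact hg0 x
  · exact EuclideanSpace.sum_abs_le_sqrt_card_mul_norm x

theorem integrable_and_integral_le_of_lintegral_ofReal_le {α : Type*} [MeasurableSpace α]
    {μ : Measure α} {g : α → ℝ} (hg : AEStronglyMeasurable g μ) (hg0 : 0 ≤ g) {R : ℝ}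
    (hR : 0 ≤ R) (h : ∫⁻ x, ENNReal.ofReal (g x) ∂μ ≤ ENNReal.ofReal R) :
    Integrable g μ ∧ ∫ x, g x ∂μ ≤ R := by
  refine ⟨⟨hg, (hasFiniteIntegral_iff_ofReal (.of_forall hg0)).2
    (h.trans_lt ENNReal.ofReal_lt_top)⟩, ?_⟩
  rw [integral_eq_lintegral_of_nonneg_ae (.of_forall hg0) hg]
  exact ENNReal.toReal_le_of_le_ofReal hR h

theorem spectral_norm_bound_general (d : ℕ) (b : ℝ) (hb : 0 ≤ b)
    (f : EuclideanSpace ℝ (Fin d) → ℂ)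
    (hf1 : Integrable f)
    (F : EuclideanSpace ℝ (Fin d) → ℂ) (hF : F = fourierTr d f)
    (hPlancherel : ∀ α : Fin d → ℕ, ((∑ i, α i) = 1 ∨ (∑ i, α i) = d / 2 + 2) →
      ∫⁻ ω : EuclideanSpace ℝ (Fin d),
          ENNReal.ofReal ((∏ i, (ω i) ^ (2 * α i)) * ‖F ω‖ ^ 2) ≤
        ENNReal.ofReal (b ^ 2)) :
    Integrable (fun ω : EuclideanSpace ℝ (Fin d) => (∑ i, |ω i|) * ‖F ω‖) ∧
    Integrable (fun ω : EuclideanSpace ℝ (Fin d) =>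
      (1 + ‖ω‖ ^ (2 * (d / 2 + 1)))⁻¹) ∧
    ∫ ω : EuclideanSpace ℝ (Fin d), (∑ i, |ω i|) * ‖F ω‖ ≤
      b * Real.sqrt d * Real.sqrt (((d : ℝ) + (d : ℝ) ^ (d / 2 + 2)) *
        ∫ ω : EuclideanSpace ℝ (Fin d), (1 + ‖ω‖ ^ (2 * (d / 2 + 1)))⁻¹) := by
  set m := d / 2 + 1
  have hFm : Measurable F := (hF ▸ continuous_fourierTr hf1).measurable
  have hw : Integrable fun ω : EuclideanSpace ℝ (Fin d) => (1 + ‖ω‖ ^ (2 * m))⁻¹ :=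
    integrable_inv_one_add_norm_pow (by rw [finrank_euclideanSpace_fin]; omega)
  have hcoord (k : ℕ) (hk : k = 1 ∨ k = m + 1) (i : Fin d) :
      ∫⁻ ω : EuclideanSpace ℝ (Fin d), ENNReal.ofReal (ω i ^ (2 * k) * ‖F ω‖ ^ 2) ≤
        ENNReal.ofReal (b ^ 2) := by
    simpa [Pi.single_apply] using hPlancherel (Pi.single i k) (by simpa using hk)
  have hmoment : ∫⁻ ω, ENNReal.ofReal ((‖ω‖ ^ 2 + ‖ω‖ ^ (2 * (m + 1))) * ‖F ω‖ ^ 2) ≤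
      ENNReal.ofReal ((d + d ^ (m + 1)) * b ^ 2) := by
    rw [ENNReal.ofReal_mul (by positivity), ENNReal.ofReal_add (by positivity) (by positivity),
      ENNReal.ofReal_pow (by positivity), ENNReal.ofReal_natCast]
    simpa using lintegral_norm_sq_add_norm_pow_mul_le (by fun_prop) (fun ω => sq_nonneg ‖F ω‖)
      m (hcoord 1 (.inl rfl)) (hcoord (m + 1) (.inr rfl))
  refine (fun h => ⟨h.1, hw, h.2⟩) <| integrable_and_integral_le_of_lintegral_ofReal_le
    (by fun_prop) (fun ω => by positivity) (by positivity) ?_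
  calc ∫⁻ ω, ENNReal.ofReal ((∑ i, |ω i|) * ‖F ω‖)
      ≤ ENNReal.ofReal √d * ∫⁻ ω, ENNReal.ofReal (‖ω‖ * ‖F ω‖) := by
        simpa using lintegral_sum_abs_mul_le (by fun_prop) (fun ω => norm_nonneg (F ω))
    _ ≤ ENNReal.ofReal √d * (ENNReal.ofReal (∫ ω, (1 + ‖ω‖ ^ (2 * m))⁻¹) ^ (1 / 2 : ℝ) *
          ENNReal.ofReal ((d + d ^ (m + 1)) * b ^ 2) ^ (1 / 2 : ℝ)) := by
        grw [lintegral_norm_mul_le_of_weight (by fun_prop) (fun ω => norm_nonneg (F ω)) m hw,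
          hmoment]
    _ = ENNReal.ofReal (b * √d * √((d + d ^ (m + 1)) * ∫ ω, (1 + ‖ω‖ ^ (2 * m))⁻¹)) := by
        rw [ENNReal.ofReal_rpow_of_nonneg (integral_nonneg fun ω => by positivity) (by norm_num),
          ENNReal.ofReal_rpow_of_nonneg (by positivity) (by norm_num), ← Real.sqrt_eq_rpow,
          ← Real.sqrt_eq_rpow, ← ENNReal.ofReal_mul (by positivity),
          ← ENNReal.ofReal_mul (by positivity), Real.sqrt_mul' _ (sq_nonneg b), Real.sqrt_sq hb,
          Real.sqrt_mul (by positivity)]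
        congr 1
        ring

theorem spectral_norm_bound (d : ℕ) (b : ℝ) (hb : 0 ≤ b)
    (f : EuclideanSpace ℝ (Fin d) → ℂ)
    (hf1 : Integrable f) (hf2 : MemLp f 2 (volume : Measure (EuclideanSpace ℝ (Fin d))))
    (F : EuclideanSpace ℝ (Fin d) → ℂ) (hF : F = fourierTr d f)
    (hPlancherel : ∀ α : Fin d → ℕ, ((∑ i, α i) = 1 ∨ (∑ i, α i) = d / 2 + 2) →
      ∫⁻ ω : EuclideanSpace ℝ (Fin d),
          ENNReal.ofReal ((∏ i, (ω i) ^ (2 * α i)) * ‖F ω‖ ^ 2) ≤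
        ENNReal.ofReal (b ^ 2)) :
    Integrable (fun ω : EuclideanSpace ℝ (Fin d) => (∑ i, |ω i|) * ‖F ω‖) ∧
    Integrable (fun ω : EuclideanSpace ℝ (Fin d) =>
      (1 + ‖ω‖ ^ (2 * (d / 2 + 1)))⁻¹) ∧
    ∫ ω : EuclideanSpace ℝ (Fin d), (∑ i, |ω i|) * ‖F ω‖ ≤
      b * Real.sqrt d * Real.sqrt (((d : ℝ) + (d : ℝ) ^ (d / 2 + 2)) *
        ∫ ω : EuclideanSpace ℝ (Fin d), (1 + ‖ω‖ ^ (2 * (d / 2 + 1)))⁻¹) :=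
  spectral_norm_bound_general d b hb f hf1 F hF hPlancherel
end

section
/- Let X ⊂ ℝ be an interval, and let f : ℝ → ℝ be given by f = 1_{C} − 1_{ℝ∖C} where C = {x : g(x) ≥ 0} for a function g having at most N zeros, each pair of zeros at distance at least b > 0 apart. Then the first-order L¹ modulus of smoothness satisfies ξ(f, t) := sup_{|u| ≤ t} ∫_ℝ |f(x + u) − f(x)|·1_X(x) dx ≤ 4Nt for t ≤ b, whence sup_{t>0} t^{−s} ξ(f,t) ≤ 4N b^{1−s} ∨ 2 b^{−s} λ(X) for any 0 < s ≤ 1. -/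
/-!
For `f = 1_{g ≥ 0} - 1_{g < 0}` and continuous `g`, the intermediate value theorem shows that
`f(x + u) ≠ f(x)` forces a zero of `g` within distance `|u|` of `x`. The integrand
`|f(x + u) - f(x)| ≤ 2` is therefore supported in the union of the closed balls of radius
`|u| ≤ t` around the at most `N` zeros, a set of measure at most `2Nt`; this gives
`4Nt`. For the weighted bound, `t ^ (-s) * 4Nt ≤ 4N b ^ (1 - s)` when `t ≤ b`, while for `t > b`
the trivial bound `2 λ(X)` and `t ^ (-s) ≤ b ^ (-s)` suffice.
-/

open MeasureTheory Metric Set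

noncomputable def nonnegSign (y : ℝ) : ℝ := if 0 ≤ y then 1 else -1

lemma measurable_nonnegSign : Measurable nonnegSign :=
  Measurable.ite measurableSet_Ici measurable_const measurable_const

lemma abs_nonnegSign_sub_le_two (y y' : ℝ) : |nonnegSign y - nonnegSign y'| ≤ 2 := by
  unfold nonnegSign
  split_ifs <;> norm_num

lemma exists_zero_mem_uIcc_of_nonnegSign_ne {g : ℝ → ℝ} (hg : Continuous g) {x y : ℝ}
    (h : nonnegSign (g y) ≠ nonnegSign (g x)) : ∃ z ∈ uIcc x y, g z = 0 := by
  have hzero : (0 : ℝ) ∈ uIcc (g x) (g y) := by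
    by_cases hy : 0 ≤ g y <;> by_cases hx : 0 ≤ g x <;> simp_all [nonnegSign, mem_uIcc] <;>
      first | exact Or.inl hx.le | exact Or.inr hy.le
  exact intermediate_value_uIcc hg.continuousOn hzero

lemma abs_nonnegSign_sub_le_indicator {g : ℝ → ℝ} (hg : Continuous g) {u t : ℝ}
    (hu : |u| ≤ t) (x : ℝ) :
    |nonnegSign (g (x + u)) - nonnegSign (g x)| ≤
      (⋃ z ∈ {z | g z = 0}, closedBall z t).indicator (fun _ => 2) x := by
  by_cases hsign : nonnegSign (g (x + u)) = nonnegSign (g x)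
  · rw [hsign, sub_self, abs_zero]
    exact indicator_nonneg (fun _ _ => zero_le_two) x
  obtain ⟨z, hz, hgz⟩ := exists_zero_mem_uIcc_of_nonnegSign_ne hg hsign
  have hxz : dist x z ≤ t := by
    refine le_trans ?_ hu
    simpa [Real.dist_eq, abs_sub_comm] using abs_sub_left_of_mem_uIcc hz
  rw [indicator_of_mem (mem_iUnion₂.mpr ⟨z, hgz, mem_closedBall.mpr hxz⟩)]
  exact abs_nonnegSign_sub_le_two _ _

lemma volume_real_biUnion_closedBall_le {Z : Set ℝ} (hZ : Z.Finite) {t : ℝ} (ht : 0 ≤ t) :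
    volume.real (⋃ z ∈ Z, closedBall z t) ≤ Z.ncard * (2 * t) := by
  calc volume.real (⋃ z ∈ Z, closedBall z t)
      = volume.real (⋃ z ∈ hZ.toFinset, closedBall z t) := by simp
    _ ≤ ∑ z ∈ hZ.toFinset, volume.real (closedBall z t) := measureReal_biUnion_finset_le _ _
    _ = Z.ncard * (2 * t) := by
      simp [Real.volume_real_closedBall ht, Set.ncard_eq_toFinset_card _ hZ]

lemma setIntegral_le_of_le_indicator_const {α : Type*} [MeasurableSpace α] {μ : Measure α}
    {f : α → ℝ} {B : Set α} {M : ℝ} (S : Set α) (hB : MeasurableSet B) (hμB : μ B ≠ ⊤)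
    (hf : AEStronglyMeasurable f μ) (hf_nonneg : ∀ x, 0 ≤ f x)
    (hf_le : ∀ x, f x ≤ B.indicator (fun _ => M) x) :
    ∫ x in S, f x ∂μ ≤ μ.real B * M := by
  have hind : Integrable (B.indicator fun _ => M) μ :=
    (integrable_indicator_iff hB).mpr (integrableOn_const hμB)
  have hfi : Integrable f μ :=
    hind.mono' hf (ae_of_all _ fun x => by
      rw [Real.norm_of_nonneg (hf_nonneg x)]; exact hf_le x)
  calc ∫ x in S, f x ∂μ ≤ ∫ x, f x ∂μ := setIntegral_le_integral hfi (ae_of_all _ hf_nonneg)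
    _ ≤ ∫ x, B.indicator (fun _ => M) x ∂μ := integral_mono hfi hind hf_le
    _ = μ.real B * M := integral_indicator_const M hB

theorem setIntegral_abs_nonnegSign_sub_le {g : ℝ → ℝ} (hg : Continuous g)
    (hZ : {x | g x = 0}.Finite) (S : Set ℝ) {u t : ℝ} (hu : |u| ≤ t) :
    ∫ x in S, |nonnegSign (g (x + u)) - nonnegSign (g x)| ≤
      4 * {x | g x = 0}.ncard * t := by
  have ht : 0 ≤ t := (abs_nonneg u).trans hu
  have hB : MeasurableSet (⋃ z ∈ {z | g z = 0}, closedBall z t) :=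
    hZ.measurableSet_biUnion fun _ _ => measurableSet_closedBall
  have hμB : volume (⋃ z ∈ {z | g z = 0}, closedBall z t) ≠ ⊤ :=
    (hZ.isCompact_biUnion fun _ _ => isCompact_closedBall _ _).measure_lt_top.ne
  have hmeas : Measurable fun x => |nonnegSign (g (x + u)) - nonnegSign (g x)| :=
    ((measurable_nonnegSign.comp (hg.comp (continuous_add_const u)).measurable).sub
      (measurable_nonnegSign.comp hg.measurable)).abs
  calc ∫ x in S, |nonnegSign (g (x + u)) - nonnegSign (g x)|
      ≤ volume.real (⋃ z ∈ {z | g z = 0}, closedBall z t) * 2 :=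
        setIntegral_le_of_le_indicator_const S hB hμB hmeas.aestronglyMeasurable
          (fun _ => abs_nonneg _) (abs_nonnegSign_sub_le_indicator hg hu)
    _ ≤ {x | g x = 0}.ncard * (2 * t) * 2 := by
        gcongr
        exact volume_real_biUnion_closedBall_le hZ ht
    _ = 4 * {x | g x = 0}.ncard * t := by ring

lemma setIntegral_abs_nonnegSign_sub_le_two_mul (g : ℝ → ℝ) {S : Set ℝ} (hS : volume S < ⊤)
    (u : ℝ) : ∫ x in S, |nonnegSign (g (x + u)) - nonnegSign (g x)| ≤ 2 * volume.real S := by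
  refine (le_abs_self _).trans ?_
  exact norm_setIntegral_le_of_norm_le_const hS fun x _ =>
    (Real.norm_of_nonneg (abs_nonneg _)).trans_le (abs_nonnegSign_sub_le_two _ _)

lemma rpow_neg_mul_le_max {b s t I A M V : ℝ} (hb : 0 < b) (hs : 0 < s) (hs1 : s ≤ 1)
    (ht : 0 < t) (hA : 0 ≤ A) (hI : 0 ≤ I) (hIA : I ≤ A * t) (hIV : I ≤ M * V) :
    t ^ (-s) * I ≤ max (A * b ^ (1 - s)) (M * b ^ (-s) * V) := by
  rcases le_or_gt t b with htb | hbt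
  · refine le_max_of_le_left ?_
    calc t ^ (-s) * I ≤ t ^ (-s) * (A * t) := by gcongr
      _ = A * t ^ (1 - s) := by
        rw [sub_eq_neg_add, Real.rpow_add ht, Real.rpow_one]; ring
      _ ≤ A * b ^ (1 - s) := by gcongr
  · refine le_max_of_le_right ?_
    calc t ^ (-s) * I ≤ b ^ (-s) * (M * V) := by
          exact mul_le_mul (Real.rpow_le_rpow_of_nonpos hb hbt.le (by linarith)) hIV hI
            (by positivity)
      _ = M * b ^ (-s) * V := by ring

theorem tv_potential_lipschitz_general (a c b : ℝ) (hb : 0 < b) (N : ℕ)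
    (g : ℝ → ℝ) (hg : Continuous g)
    (hZfin : {x : ℝ | g x = 0}.Finite)
    (hZcard : {x : ℝ | g x = 0}.ncard ≤ N) :
    (∀ t : ℝ, 0 < t → t ≤ b → ∀ u : ℝ, |u| ≤ t →
      ∫ x in Set.Icc a c,
        |(if 0 ≤ g (x + u) then (1 : ℝ) else -1) -
          (if 0 ≤ g x then (1 : ℝ) else -1)| ≤ 4 * N * t) ∧
    (∀ s : ℝ, 0 < s → s ≤ 1 → ∀ t : ℝ, 0 < t → ∀ u : ℝ, |u| ≤ t →
      t ^ (-s) * ∫ x in Set.Icc a c,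
          |(if 0 ≤ g (x + u) then (1 : ℝ) else -1) -
            (if 0 ≤ g x then (1 : ℝ) else -1)| ≤
        max (4 * N * b ^ (1 - s))
          (2 * b ^ (-s) * (volume (Set.Icc a c)).toReal)) := by
  have hjump : ∀ t u : ℝ, |u| ≤ t →
      ∫ x in Icc a c, |nonnegSign (g (x + u)) - nonnegSign (g x)| ≤ 4 * N * t := by
    intro t u hu
    refine (setIntegral_abs_nonnegSign_sub_le hg hZfin _ hu).trans ?_
    have ht : 0 ≤ t := (abs_nonneg u).trans hu
    gcongr
  refine ⟨fun t _ _ u hu => hjump t u hu, fun s hs hs1 t ht u hu => ?_⟩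
  exact rpow_neg_mul_le_max hb hs hs1 ht (by positivity)
    (setIntegral_nonneg measurableSet_Icc fun _ _ => abs_nonneg _) (hjump t u hu)
    (setIntegral_abs_nonnegSign_sub_le_two_mul g measure_Icc_lt_top u)

theorem tv_potential_lipschitz (a c b : ℝ) (hb : 0 < b) (N : ℕ)
    (g : ℝ → ℝ) (hg : Continuous g)
    (hZfin : {x : ℝ | g x = 0}.Finite)
    (hZcard : {x : ℝ | g x = 0}.ncard ≤ N)
    (hsep : ∀ x ∈ {x : ℝ | g x = 0}, ∀ y ∈ {x : ℝ | g x = 0},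
      x ≠ y → b ≤ |x - y|) :
    (∀ t : ℝ, 0 < t → t ≤ b → ∀ u : ℝ, |u| ≤ t →
      ∫ x in Set.Icc a c,
        |(if 0 ≤ g (x + u) then (1 : ℝ) else -1) -
          (if 0 ≤ g x then (1 : ℝ) else -1)| ≤ 4 * N * t) ∧
    (∀ s : ℝ, 0 < s → s ≤ 1 → ∀ t : ℝ, 0 < t → ∀ u : ℝ, |u| ≤ t →
      t ^ (-s) * ∫ x in Set.Icc a c,
          |(if 0 ≤ g (x + u) then (1 : ℝ) else -1) -
            (if 0 ≤ g x then (1 : ℝ) else -1)| ≤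
        max (4 * N * b ^ (1 - s))
          (2 * b ^ (-s) * (volume (Set.Icc a c)).toReal)) :=
  tv_potential_lipschitz_general a c b hb N g hg hZfin hZcard
end
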